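/- Let G be a connected block graph, v ∈ V(G), and k an integer with 2 ≤ k ≤ n(G). Let T(v,G) be the spanning tree of G obtained by deleting, from every block B of G, each edge of B not incident with Near_G(v,B). Then ecc_k(v,G) = ecc_k(v,T(v,G)). -/

import Mathlib

open SimpleGraph

variable {V : Type*}

/-- `x` is a cut vertex of `H`: removing `x` leaves two vertices with no path
between them (i.e. disconnects `H`). -/
def IsCutVertex {W : Type*} (H : SimpleGraph W) (x : W) : Prop :=
  ¬ (H.induce {y : W | y ≠ x}).Preconnected

/-- A block of `G`: a maximal connected subgraph of `G` with no cut vertex. -/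
def IsBlock (G : SimpleGraph V) (B : G.Subgraph) : Prop :=
  B.Connected ∧ (∀ x : B.verts, ¬ IsCutVertex B.coe x) ∧
    ∀ B' : G.Subgraph, B ≤ B' → B'.Connected →
      (∀ x : B'.verts, ¬ IsCutVertex B'.coe x) → B' = B

/-- A block graph: every block is a clique. -/
def IsBlockGraph (G : SimpleGraph V) : Prop :=
  ∀ B : G.Subgraph, IsBlock G B → G.IsClique B.verts

/-- `x` is a vertex of the block `B` at minimum distance from `v` in `G`. -/
def IsNearest (G : SimpleGraph V) (v : V) (B : G.Subgraph) (x : V) : Prop :=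
  x ∈ B.verts ∧ ∀ w ∈ B.verts, G.dist v x ≤ G.dist v w

/-- `T` is the graph `T(v,G)`: obtained from `G` by deleting, from every block `B`,
each edge of `B` not incident with the nearest vertex of `B` to `v`. -/
def IsTvG (G T : SimpleGraph V) (v : V) : Prop :=
  ∀ a b : V, T.Adj a b ↔ (G.Adj a b ∧
    ∀ B : G.Subgraph, IsBlock G B → B.Adj a b →
      (IsNearest G v B a ∨ IsNearest G v B b))

/-- A Steiner `S`-tree of `G`: a connected subgraph of `G` containing all vertices
of `S`, with the minimum number of edges among such subgraphs. -/
def IsSteinerTree (G : SimpleGraph V) (S : Set V) (T : G.Subgraph) : Prop :=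
  T.Connected ∧ S ⊆ T.verts ∧
    ∀ T' : G.Subgraph, T'.Connected → S ⊆ T'.verts →
      T.edgeSet.ncard ≤ T'.edgeSet.ncard

/-- The Steiner `k`-eccentricity of `v` in `G`: the maximum, over all `k`-subsets
`S` of `V(G)` with `v ∈ S`, of the number of edges of a Steiner `S`-tree. -/
noncomputable def steinerEcc (G : SimpleGraph V) (k : ℕ) (v : V) : ℕ :=
  sSup { n | ∃ S : Finset V, S.card = k ∧ v ∈ S ∧
    ∃ T : G.Subgraph, IsSteinerTree G ↑S T ∧ T.edgeSet.ncard = n }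

/-- A Steiner `k`-ecc `v`-tree: a Steiner `S`-tree, for some `k`-set `S` containing
`v`, whose number of edges realizes the Steiner `k`-eccentricity of `v`. -/
def IsSteinerKEccTree (G : SimpleGraph V) (k : ℕ) (v : V) (T₀ : G.Subgraph) : Prop :=
  ∃ S : Finset V, S.card = k ∧ v ∈ S ∧ IsSteinerTree G ↑S T₀ ∧
    T₀.edgeSet.ncard = steinerEcc G k v

/-- The Steiner distance of `S` in `G`. -/
noncomputable def steinerDist (G : SimpleGraph V) (S : Set V) : ℕ :=
  sInf { n | ∃ T : G.Subgraph, T.Connected ∧ S ⊆ T.verts ∧ T.edgeSet.ncard = n }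

/-!
Both eccentricities are maxima of minimum sizes of connected subgraphs containing sets `S ∋ v`.
Since `T ≤ G`, it suffices to turn every connected subgraph `H ∋ v` of `G` into a connected
subgraph of `T` on the same vertices with no more edges. A path between two vertices of a block
stays in the block (otherwise block and path would form a larger subgraph without cut vertex),
so the vertex `g` of a block `B` nearest to `v` lies on every walk from `v` into `B`. An edge
`ab` of `H` missing from `T` lies in a block where neither `a` nor `b` is nearest; its gate `g`
is then a vertex of `H` and `a g b` is a path of `T`. Hence `T` induces a connected graph on
`V(H)`, and a spanning tree of it has `|V(H)| - 1 ≤ |E(H)|` edges.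
-/

variable {G : SimpleGraph V}

namespace SimpleGraph

namespace Subgraph

lemma ncard_edgeSet_eq_natCard_coe (H : G.Subgraph) :
    H.edgeSet.ncard = Nat.card H.coe.edgeSet := by
  rw [← image_coe_edgeSet_coe, Set.ncard_image_of_injective _
    (Sym2.map.injective Subtype.val_injective), Nat.card_coe_set_eq]

lemma Connected.ncard_verts_le_ncard_edgeSet_add_one [Finite V] {H : G.Subgraph}
    (hH : H.Connected) : H.verts.ncard ≤ H.edgeSet.ncard + 1 := by
  rw [ncard_edgeSet_eq_natCard_coe, ← Nat.card_coe_set_eq]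
  exact hH.coe.card_vert_le_card_edgeSet_add_one

lemma Connected.exists_le_ncard_edgeSet_add_one_eq [Finite V] {H : G.Subgraph}
    (hH : H.Connected) :
    ∃ K ≤ H, K.Connected ∧ K.verts = H.verts ∧ K.edgeSet.ncard + 1 = H.verts.ncard := by
  obtain ⟨F, hFH, hF⟩ := hH.coe.exists_isTree_le
  refine ⟨Subgraph.coeSubgraph (SimpleGraph.toSubgraph F hFH), coeSubgraph_le _,
    (SimpleGraph.Connected.toSubgraph hFH hF.connected).coeSubgraph _, by simp, ?_⟩
  rw [edgeSet_map, Set.ncard_image_of_injective _ (Sym2.map.injective H.hom_injective),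
    ← Nat.card_coe_set_eq, ← Nat.card_coe_set_eq]
  exact (isTree_iff_connected_and_card.mp hF).2

lemma preconnected_of_forall_exists_walk {H K : G.Subgraph} (hK : K.Preconnected) (hKH : K ≤ H)
    (h : ∀ w ∈ H.verts, w ∉ K.verts → ∃ k ∈ K.verts, ∃ p : G.Walk w k, p.toSubgraph ≤ H) :
    H.Preconnected := by
  have reach : ∀ w ∈ H.verts, ∃ k ∈ K.verts, ∃ p : G.Walk w k, p.toSubgraph ≤ H := by
    intro w hw
    by_cases hwK : w ∈ K.verts
    · exact ⟨w, hwK, .nil, by simpa using hw⟩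
    · exact h w hw hwK
  rw [preconnected_iff_forall_exists_walk_subgraph]
  intro u w hu hw
  obtain ⟨k, hk, p, hp⟩ := reach u hu
  obtain ⟨k', hk', p', hp'⟩ := reach w hw
  obtain ⟨q, hq⟩ := (preconnected_iff_forall_exists_walk_subgraph K).mp hK hk hk'
  exact ⟨p.append (q.append p'.reverse), by
    simp [Walk.toSubgraph_append, Walk.toSubgraph_reverse, hp, hq.trans hKH, hp']⟩

end Subgraph

namespace Walk

variable {u w x y : V}

lemma toSubgraph_le_deleteVerts {H : G.Subgraph} {p : G.Walk u w} (hp : p.toSubgraph ≤ H)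
    (hx : x ∉ p.support) : p.toSubgraph ≤ H.deleteVerts {x} := by
  have hverts : ∀ y ∈ p.toSubgraph.verts, y ∈ H.verts \ {x} := fun y hy =>
    ⟨hp.1 hy, fun hyx => hx (hyx ▸ p.mem_verts_toSubgraph.mp hy)⟩
  exact ⟨hverts, fun a b hab => ⟨hverts a (p.toSubgraph.edge_vert hab),
    hverts b (p.toSubgraph.edge_vert hab.symm), hp.2 hab⟩⟩

lemma IsPath.exists_walk_avoiding {p : G.Walk u w} (hp : p.IsPath) (hy : y ∈ p.support)
    (hyx : y ≠ x) :
    (∃ q : G.Walk y u, q.toSubgraph ≤ p.toSubgraph ∧ x ∉ q.support) ∨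
      (∃ q : G.Walk y w, q.toSubgraph ≤ p.toSubgraph ∧ x ∉ q.support) := by
  classical
  have hspec := p.take_spec hy
  have hnodup : ((p.takeUntil y hy).support ++ (p.dropUntil y hy).support.tail).Nodup := by
    rw [← support_append, hspec]; exact hp.support_nodup
  have hle : (p.takeUntil y hy).toSubgraph ⊔ (p.dropUntil y hy).toSubgraph ≤ p.toSubgraph := by
    rw [← toSubgraph_append, hspec]
  by_cases hx : x ∈ (p.dropUntil y hy).support
  · refine Or.inl ⟨(p.takeUntil y hy).reverse, by simpa using le_sup_left.trans hle,
      fun hx' => ?_⟩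
    rw [support_reverse, List.mem_reverse] at hx'
    rw [← cons_tail_support, List.mem_cons] at hx
    exact List.disjoint_of_nodup_append hnodup hx' (hx.resolve_left hyx.symm)
  · exact Or.inr ⟨p.dropUntil y hy, le_sup_right.trans hle, hx⟩

lemma exists_prefix_first_mem {v a : V} (P : G.Walk v a) {S : Set V} (ha : a ∈ S) :
    ∃ u ∈ S, ∃ Q : G.Walk v u, Q.support ⊆ P.support ∧ Q.length ≤ P.length ∧
      ∀ w ∈ Q.support, w ∈ S → w = u := by
  classical
  obtain ⟨u, hus, hu, hfirst⟩ :=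
    P.exists_mem_support_forall_mem_support_imp_eq {x ∈ P.support.toFinset | x ∈ S}
      ⟨a, by simp [ha]⟩
  refine ⟨u, (Finset.mem_filter.mp hus).2, P.takeUntil u hu,
    P.support_takeUntil_subset_support hu, P.length_takeUntil_le_length hu, fun w hw hwS => ?_⟩
  exact hfirst w (by simp [P.support_takeUntil_subset_support hu hw, hwS]) hw

end Walk

end SimpleGraph

lemma not_isCutVertex_iff {B : G.Subgraph} (x : B.verts) :
    ¬ IsCutVertex B.coe x ↔ (B.deleteVerts {x.1}).Preconnected := by
  have hset : {y : B.verts | y ≠ x} = {y | y.1 ∉ ({x.1} : Set V)} := by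
    ext y
    simp [Subtype.ext_iff]
  rw [IsCutVertex, not_not, Subgraph.preconnected_iff,
    (Subgraph.coeDeleteVertsIso {x.1}).preconnected_iff, hset]

namespace IsBlock

variable {B B₁ B₂ : G.Subgraph}

lemma preconnected_deleteVerts (hB : IsBlock G B) (x : V) :
    (B.deleteVerts {x}).Preconnected := by
  by_cases hx : x ∈ B.verts
  · exact (not_isCutVertex_iff ⟨x, hx⟩).mp (hB.2.1 ⟨x, hx⟩)
  · rw [← Subgraph.deleteVerts_inter_verts_left_eq, Set.inter_singleton_eq_empty.mpr hx,
      Subgraph.deleteVerts_empty]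
    exact hB.1.preconnected

lemma eq_of_le (hB : IsBlock G B) {B' : G.Subgraph} (hle : B ≤ B') (hc : B'.Connected)
    (hcut : ∀ x, (B'.deleteVerts {x}).Preconnected) : B' = B :=
  hB.2.2 B' hle hc fun x => (not_isCutVertex_iff x).mpr (hcut x.1)

lemma eq_of_mem_of_mem (hB₁ : IsBlock G B₁) (hB₂ : IsBlock G B₂) {p q : V} (hpq : p ≠ q)
    (hp₁ : p ∈ B₁.verts) (hq₁ : q ∈ B₁.verts) (hp₂ : p ∈ B₂.verts) (hq₂ : q ∈ B₂.verts) :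
    B₁ = B₂ := by
  suffices hcut : ∀ x, ((B₁ ⊔ B₂).deleteVerts {x}).Preconnected by
    have hc := Subgraph.connected_sup hB₁.1.preconnected hB₂.1.preconnected ⟨p, hp₁, hp₂⟩
    exact (hB₁.eq_of_le le_sup_left hc hcut).symm.trans (hB₂.eq_of_le le_sup_right hc hcut)
  intro x
  obtain ⟨s, hs₁, hs₂, hsx⟩ : ∃ s ∈ B₁.verts, s ∈ B₂.verts ∧ s ≠ x := by
    by_cases hpx : p = x
    · exact ⟨q, hq₁, hq₂, hpx ▸ hpq.symm⟩
    · exact ⟨p, hp₁, hp₂, hpx⟩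
  have hc := Subgraph.connected_sup (hB₁.preconnected_deleteVerts x)
    (hB₂.preconnected_deleteVerts x) ⟨s, ⟨hs₁, hsx⟩, hs₂, hsx⟩
  refine (hc.mono (sup_le (Subgraph.deleteVerts_mono le_sup_left)
    (Subgraph.deleteVerts_mono le_sup_right)) ?_).preconnected
  simp [Set.union_sdiff_distrib]

lemma toSubgraph_le (hB : IsBlock G B) {u w : V} (hu : u ∈ B.verts) (hw : w ∈ B.verts)
    {p : G.Walk u w} (hp : p.IsPath) : p.toSubgraph ≤ B := by
  have hc : (B ⊔ p.toSubgraph).Connected := Subgraph.connected_sup hB.1.preconnected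
    p.toSubgraph_connected.preconnected ⟨u, hu, p.start_mem_verts_toSubgraph⟩
  suffices hcut : ∀ x, ((B ⊔ p.toSubgraph).deleteVerts {x}).Preconnected from
    hB.eq_of_le le_sup_left hc hcut ▸ le_sup_right
  intro x
  refine Subgraph.preconnected_of_forall_exists_walk (hB.preconnected_deleteVerts x)
    (Subgraph.deleteVerts_mono le_sup_left) ?_
  rintro y ⟨hy, hyx⟩ hyB
  have hyp : y ∈ p.support :=
    p.mem_verts_toSubgraph.mp (hy.resolve_left fun h => hyB ⟨h, hyx⟩)
  rcases hp.exists_walk_avoiding hyp hyx with ⟨q, hq, hxq⟩ | ⟨q, hq, hxq⟩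
  · exact ⟨u, ⟨hu, fun h => hxq (h ▸ q.end_mem_support)⟩, q,
      Walk.toSubgraph_le_deleteVerts (hq.trans le_sup_right) hxq⟩
  · exact ⟨w, ⟨hw, fun h => hxq (h ▸ q.end_mem_support)⟩, q,
      Walk.toSubgraph_le_deleteVerts (hq.trans le_sup_right) hxq⟩

lemma exists_gate [Finite V] (hB : IsBlock G B) {v : V}
    (hreach : ∃ a ∈ B.verts, G.Reachable v a) :
    ∃ g, IsNearest G v B g ∧ ∀ a ∈ B.verts, ∀ P : G.Walk v a, g ∈ P.support := by
  classical
  obtain ⟨a₀, ha₀, hva₀⟩ := hreach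
  obtain ⟨g₀, hg₀, hmin⟩ :=
    Set.exists_min_image B.verts (G.dist v) B.verts.toFinite ⟨a₀, ha₀⟩
  have hvg₀ : G.Reachable v g₀ := hva₀.trans ((hB.1 ⟨a₀, ha₀⟩ ⟨g₀, hg₀⟩).map B.hom)
  obtain ⟨R, hR⟩ := hvg₀.exists_walk_length_eq_dist
  obtain ⟨g, hg, Q, -, hQR, hQ⟩ := R.exists_prefix_first_mem hg₀
  refine ⟨g, ⟨hg, fun w hw => (dist_le Q).trans (hQR.trans (hR ▸ hmin w hw))⟩,
    fun a ha P => by_contra fun hgP => ?_⟩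
  obtain ⟨u, hu, Q', hQ'P, -, hQ'⟩ := P.exists_prefix_first_mem ha
  -- The path `π` from `g` to `u` stays in `B`, but its first edge comes either from `Q`,
  -- which meets `B` only at `g`, or from `Q'`, which avoids `g`.
  set π := (Q.reverse.append Q').bypass
  have hπ : ¬ π.Nil :=
    Walk.not_nil_of_ne fun hgu : g = u => hgP (hQ'P (hgu ▸ Q'.end_mem_support))
  have hfirst := π.mk_start_snd_mem_edges hπ
  have hsnd : π.snd ∈ B.verts := (hB.toSubgraph_le hg hu (Walk.bypass_isPath _)).1
    (π.mem_verts_toSubgraph.mpr (π.snd_mem_support_of_mem_edges hfirst))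
  have hedge := Walk.edges_bypass_subset_edges _ hfirst
  rw [Walk.edges_append, List.mem_append, Walk.edges_reverse, List.mem_reverse] at hedge
  rcases hedge with h | h
  · exact (π.adj_snd hπ).ne (hQ _ (Q.snd_mem_support_of_mem_edges h) hsnd).symm
  · exact hgP (hQ'P (Q'.fst_mem_support_of_mem_edges h))

end IsBlock

namespace IsTvG

variable {T : SimpleGraph V} {v : V}

lemma le (hT : IsTvG G T v) : T ≤ G := fun a b h => ((hT a b).mp h).1

lemma exists_isBlock_of_not_adj (hT : IsTvG G T v) {a b : V} (hab : G.Adj a b)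
    (hTab : ¬ T.Adj a b) :
    ∃ B, IsBlock G B ∧ B.Adj a b ∧ ¬ IsNearest G v B a ∧ ¬ IsNearest G v B b := by
  rw [hT] at hTab
  push Not at hTab
  exact hTab hab

lemma adj_of_isNearest (hT : IsTvG G T v) (hBG : IsBlockGraph G) {B : G.Subgraph}
    (hB : IsBlock G B) {g w : V} (hg : IsNearest G v B g) (hw : w ∈ B.verts) (hwg : w ≠ g) :
    T.Adj g w :=
  (hT g w).mpr ⟨hBG B hB hg.1 hw hwg.symm, fun _ hB' hgw =>
    Or.inl (hB'.eq_of_mem_of_mem hB hwg.symm hgw.fst_mem hgw.snd_mem hg.1 hw ▸ hg)⟩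

lemma connected_induce [Finite V] (hT : IsTvG G T v) (hBG : IsBlockGraph G) {H : G.Subgraph}
    (hH : H.Connected) (hv : v ∈ H.verts) : (T.induce H.verts).Connected := by
  have step : ∀ x y : H.verts, H.coe.Adj x y → (T.induce H.verts).Reachable x y := by
    rintro ⟨a, ha⟩ ⟨b, hb⟩ hab
    by_cases hTab : T.Adj a b
    · exact Adj.reachable hTab
    obtain ⟨B, hB, hBab, hna, hnb⟩ := hT.exists_isBlock_of_not_adj hab.adj_sub hTab
    obtain ⟨P, hP⟩ := (Subgraph.preconnected_iff_forall_exists_walk_subgraph H).mp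
      hH.preconnected hv ha
    obtain ⟨g, hg, hgate⟩ := hB.exists_gate ⟨a, hBab.fst_mem, P.reachable⟩
    have hgH : g ∈ H.verts := hP.1 (P.mem_verts_toSubgraph.mpr (hgate a hBab.fst_mem P))
    have hga : T.Adj g a := hT.adj_of_isNearest hBG hB hg hBab.fst_mem fun h => hna (h ▸ hg)
    have hgb : T.Adj g b := hT.adj_of_isNearest hBG hB hg hBab.snd_mem fun h => hnb (h ▸ hg)
    have hag : (T.induce H.verts).Adj ⟨a, ha⟩ ⟨g, hgH⟩ := hga.symm
    have hgb' : (T.induce H.verts).Adj ⟨g, hgH⟩ ⟨b, hb⟩ := hgb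
    exact hag.reachable.trans hgb'.reachable
  refine (connected_iff _).mpr ⟨fun x y => ?_, ⟨⟨v, hv⟩⟩⟩
  induction (reachable_iff_reflTransGen x y).mp (hH.coe.preconnected x y) with
  | refl => rfl
  | tail _ hadj ih => exact ih.trans (step _ _ hadj)

end IsTvG

lemma exists_isSteinerTree {S : Set V} (h : ∃ K : G.Subgraph, K.Connected ∧ S ⊆ K.verts) :
    ∃ K, IsSteinerTree G S K := by
  classical
  have hex : ∃ n, ∃ K : G.Subgraph, K.Connected ∧ S ⊆ K.verts ∧ K.edgeSet.ncard = n :=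
    let ⟨K, hK, hS⟩ := h; ⟨_, K, hK, hS, rfl⟩
  obtain ⟨K, hK, hS, hn⟩ := Nat.find_spec hex
  exact ⟨K, hK, hS, fun K' hK' hS' => hn ▸ Nat.find_min' hex ⟨K', hK', hS', rfl⟩⟩

/-- Every connected subgraph of `G₁` containing `S` can be traded for a connected subgraph of
`G₂` containing `S` with at most as many edges. -/
def CheaperConnectors (G₁ G₂ : SimpleGraph V) (S : Set V) : Prop :=
  ∀ K : G₁.Subgraph, K.Connected → S ⊆ K.verts →
    ∃ K' : G₂.Subgraph, K'.Connected ∧ S ⊆ K'.verts ∧ K'.edgeSet.ncard ≤ K.edgeSet.ncard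

lemma cheaperConnectors_of_le {G₁ G₂ : SimpleGraph V} (h : G₁ ≤ G₂) (S : Set V) :
    CheaperConnectors G₁ G₂ S := fun K hK hS =>
  ⟨{ verts := K.verts, Adj := K.Adj, adj_sub := fun hab => h (K.adj_sub hab),
     edge_vert := K.edge_vert, symm := K.symm }, ⟨hK.coe⟩, hS, le_rfl⟩

lemma IsTvG.cheaperConnectors [Finite V] {T : SimpleGraph V} {v : V} (hT : IsTvG G T v)
    (hBG : IsBlockGraph G) {S : Set V} (hv : v ∈ S) : CheaperConnectors G T S := by
  intro K hK hS
  have hKT := connected_induce_iff.mp (hT.connected_induce hBG hK (hS hv))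
  obtain ⟨K', -, hK'c, hK'v, hK'e⟩ := hKT.exists_le_ncard_edgeSet_add_one_eq
  refine ⟨K', hK'c, hK'v ▸ hS, ?_⟩
  have := hK.ncard_verts_le_ncard_edgeSet_add_one
  simp only [Subgraph.induce_verts] at hK'e
  omega

lemma IsSteinerTree.exists_of_cheaperConnectors {G₁ G₂ : SimpleGraph V} {S : Set V}
    {K : G₁.Subgraph} (hK : IsSteinerTree G₁ S K) (h₁₂ : CheaperConnectors G₁ G₂ S)
    (h₂₁ : CheaperConnectors G₂ G₁ S) :
    ∃ K' : G₂.Subgraph, IsSteinerTree G₂ S K' ∧ K'.edgeSet.ncard = K.edgeSet.ncard := by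
  obtain ⟨K₂, hK₂c, hK₂S, hK₂le⟩ := h₁₂ K hK.1 hK.2.1
  obtain ⟨M, hM⟩ := exists_isSteinerTree ⟨K₂, hK₂c, hK₂S⟩
  obtain ⟨K₁, hK₁c, hK₁S, hK₁le⟩ := h₂₁ M hM.1 hM.2.1
  exact ⟨M, hM, le_antisymm ((hM.2.2 K₂ hK₂c hK₂S).trans hK₂le)
    ((hK.2.2 K₁ hK₁c hK₁S).trans hK₁le)⟩

lemma steinerEcc_eq_of_cheaperConnectors {G₁ G₂ : SimpleGraph V} {k : ℕ} {v : V}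
    (h₁₂ : ∀ S : Set V, v ∈ S → CheaperConnectors G₁ G₂ S)
    (h₂₁ : ∀ S : Set V, v ∈ S → CheaperConnectors G₂ G₁ S) :
    steinerEcc G₁ k v = steinerEcc G₂ k v := by
  unfold steinerEcc
  congr 1
  ext n
  constructor <;> rintro ⟨S, hS, hvS, K, hK, rfl⟩
  · obtain ⟨K', hK', h⟩ := hK.exists_of_cheaperConnectors (h₁₂ S hvS) (h₂₁ S hvS)
    exact ⟨S, hS, hvS, K', hK', h⟩
  · obtain ⟨K', hK', h⟩ := hK.exists_of_cheaperConnectors (h₂₁ S hvS) (h₁₂ S hvS)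
    exact ⟨S, hS, hvS, K', hK', h⟩

theorem steiner_stmt_5_general [Fintype V] (G : SimpleGraph V)
    (hBG : IsBlockGraph G) (v : V) (T : SimpleGraph V) (hT : IsTvG G T v)
    (k : ℕ) :
    steinerEcc G k v = steinerEcc T k v :=
  steinerEcc_eq_of_cheaperConnectors (fun _ hv => hT.cheaperConnectors hBG hv)
    fun S _ => cheaperConnectors_of_le hT.le S

/-- For a connected block graph `G`, `v ∈ V(G)` and
`2 ≤ k ≤ n(G)`, one has `ecc_k(v,G) = ecc_k(v,T(v,G))`. -/
theorem steiner_stmt_5 [Fintype V] (G : SimpleGraph V) (hG : G.Connected)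
    (hBG : IsBlockGraph G) (v : V) (T : SimpleGraph V) (hT : IsTvG G T v)
    (k : ℕ) (hk2 : 2 ≤ k) (hkn : k ≤ Fintype.card V) :
    steinerEcc G k v = steinerEcc T k v :=
  steiner_stmt_5_general G hBG v T hT k
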